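/- Let D ⊆ F_q with |D| = n > k. Any word u ∈ F_q^n whose Lagrange interpolating polynomial has degree exactly k is a deep hole of RS_q(D,k), i.e., d(u, RS_q(D,k)) = n - k. -/

import Mathlib

/-! A codeword `f|_D` with `deg f < k` agrees with `u` exactly at roots of `uP - f`, a polynomial
of degree exactly `k`, so they agree in at most `k` places. Conversely, interpolating `u` on any
`min k |D|` points of `D` gives a codeword agreeing with `u` in at least that many places. -/

/-- Error distance of a word `u` to a code `C`. -/
noncomputable def errDist {ι F : Type*} [Fintype ι] [DecidableEq F]
    (u : ι → F) (C : Set (ι → F)) : ℕ :=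
  sInf ((fun c => hammingDist u c) '' C)

/-- The Reed-Solomon code with evaluation set `D` and dimension `k`. -/
noncomputable def RSCode {F : Type*} [Field F] (D : Finset F) (k : ℕ) : Set (D → F) :=
  {v | ∃ f : Polynomial F, f.degree < k ∧ ∀ α : D, v α = f.eval (α : F)}

open Finset Polynomial

section Hamming

variable {ι β : Type*} [Fintype ι] [DecidableEq β] {x y : ι → β}

theorem hammingDist_add_card_filter_eq (x y : ι → β) :
    hammingDist x y + #{i | x i = y i} = Fintype.card ι := by
  rw [add_comm, hammingDist, card_filter_add_card_filter_not, card_univ]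

theorem hammingDist_le_card_sub_of_eqOn {S : Finset ι} (h : ∀ i ∈ S, x i = y i) :
    hammingDist x y ≤ Fintype.card ι - #S := by
  have hS : #S ≤ #{i | x i = y i} := card_le_card fun i hi => by simpa using h i hi
  have := hammingDist_add_card_filter_eq x y
  omega

theorem card_sub_le_hammingDist {m : ℕ} (h : #{i | x i = y i} ≤ m) :
    Fintype.card ι - m ≤ hammingDist x y := by
  have := hammingDist_add_card_filter_eq x y
  omega

theorem errDist_le_hammingDist {C : Set (ι → β)} (u : ι → β) {c : ι → β} (hc : c ∈ C) :
    errDist u C ≤ hammingDist u c :=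
  Nat.sInf_le ⟨c, hc, rfl⟩

theorem le_errDist {C : Set (ι → β)} (u : ι → β) (hC : C.Nonempty) {m : ℕ}
    (h : ∀ c ∈ C, m ≤ hammingDist u c) : m ≤ errDist u C :=
  le_csInf (hC.image _) (by rintro _ ⟨c, hc, rfl⟩; exact h c hc)

end Hamming

theorem card_filter_isRoot_comp_le {ι F : Type*} [Fintype ι] [Field F] [DecidableEq F]
    {v : ι → F} (hv : Function.Injective v) {g : F[X]} (hg : g ≠ 0) :
    #{i | g.IsRoot (v i)} ≤ g.natDegree := by
  rw [← card_image_of_injective _ hv]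
  refine card_le_degree_of_subset_roots fun x hx => ?_
  obtain ⟨i, hi, rfl⟩ := mem_image.mp hx
  exact (mem_roots hg).mpr (mem_filter.mp hi).2

namespace RSCode

variable {F : Type*} [Field F] {D : Finset F} {k : ℕ}

theorem nonempty : (RSCode D k).Nonempty :=
  ⟨0, 0, by simp, fun _ => by simp⟩

theorem exists_hammingDist_le [DecidableEq F] (u : D → F) :
    ∃ c ∈ RSCode D k, hammingDist u c ≤ D.card - k := by
  obtain ⟨S, -, hS⟩ := exists_subset_card_eq (min_le_right k (univ : Finset D).card)
  have hinj : Set.InjOn ((↑) : D → F) S := Subtype.val_injective.injOn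
  set f := Lagrange.interpolate S (↑) u
  refine ⟨fun α => f.eval α, ⟨f, ?_, fun _ => rfl⟩, ?_⟩
  · exact (Lagrange.degree_interpolate_lt u hinj).trans_le
      (by rw [hS]; exact_mod_cast min_le_left _ _)
  · calc hammingDist u (fun α => f.eval α)
        ≤ Fintype.card D - #S :=
          hammingDist_le_card_sub_of_eqOn fun α hα =>
            (Lagrange.eval_interpolate_at_node u hinj hα).symm
      _ = D.card - k := by
          rw [hS, card_univ, Fintype.card_coe]
          omega

theorem card_filter_eq_le [DecidableEq F] {u : D → F} {uP : F[X]}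
    (hdeg : uP.degree = k) (hint : ∀ α : D, uP.eval (α : F) = u α)
    {c : D → F} (hc : c ∈ RSCode D k) : #{α | u α = c α} ≤ k := by
  obtain ⟨f, hf, hcf⟩ := hc
  have hdeg' : (uP - f).degree = k := by
    rw [degree_sub_eq_left_of_degree_lt (hdeg ▸ hf), hdeg]
  have hne : uP - f ≠ 0 := fun h => by simp [h] at hdeg'
  calc #{α | u α = c α} = #{α : D | (uP - f).IsRoot α} := by
        congr 1; ext α; simp [sub_eq_zero, hint, hcf]
    _ ≤ (uP - f).natDegree := card_filter_isRoot_comp_le Subtype.val_injective hne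
    _ = k := natDegree_eq_of_degree_eq_some hdeg'

end RSCode

theorem stmt2_general {F : Type*} [Field F] [DecidableEq F]
    (D : Finset F) (k : ℕ)
    (u : D → F) (uP : Polynomial F)
    (hdeg : uP.degree = (k : ℕ))
    (hint : ∀ α : D, uP.eval (α : F) = u α) :
    errDist u (RSCode D k) = D.card - k := by
  apply le_antisymm
  · obtain ⟨c, hc, hdist⟩ := RSCode.exists_hammingDist_le (k := k) u
    exact (errDist_le_hammingDist u hc).trans hdist
  · refine le_errDist u RSCode.nonempty fun c hc => ?_
    simpa using card_sub_le_hammingDist (RSCode.card_filter_eq_le hdeg hint hc)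

theorem stmt2 {F : Type*} [Field F] [Fintype F] [DecidableEq F]
    (D : Finset F) (k : ℕ) (hk : k < D.card)
    (u : D → F) (uP : Polynomial F)
    (hdeg : uP.degree = (k : ℕ))
    (hint : ∀ α : D, uP.eval (α : F) = u α) :
    errDist u (RSCode D k) = D.card - k :=
  stmt2_general D k u uP hdeg hint
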